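/- arXiv:2505.00453 — 2 statements merged into one kernel-verified Lean document; each statement's English description precedes it below -/
import Mathlib

section
/- With the hypotheses and notation of the scale-function representations (W^{(q+λ)}(x) = e^{Φ_{q+λ}x}W_{Φ_{q+λ}}(x) with W_{Φ_{q+λ}} nondecreasing, bounded by 1/ψ'(Φ_{q+λ}), and 𝕎^{(q)}(x) = e^{φ_q x}𝕎_{φ_q}(x) similarly bounded), suppose Φ_{q+λ} > φ_q and λ > 0. Define W̄bb_{a−b}^{(q,λ)}(a) := 𝕎^{(q)}(a) + λ∫₀ᵇ 𝕎^{(q)}(a−y) 𝕎^{(q+λ)}(y) dy for fixed b ≥ 0. Then lim_{a→∞} W̄bb_{a−b}^{(q,λ)}(a)/W^{(q+λ)}(a) = 0. -/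
open Set Filter Real MeasureTheory

/-- Lemma 4.3(ii): If Φ_{q+λ} > φ_q and λ > 0 then
W̄bb_{a−b}^{(q,λ)}(a)/W^{(q+λ)}(a) → 0 as a → ∞. -/
theorem stmt6 (Wql WΦ 𝕎q 𝕎φ 𝕎ql : ℝ → ℝ) (Φql φq LW L𝕎 lam b : ℝ)
    (hlam : 0 < lam) (hb : 0 ≤ b)
    (hW : ∀ x, Wql x = exp (Φql * x) * WΦ x)
    (h𝕎 : ∀ x, 𝕎q x = exp (φq * x) * 𝕎φ x)
    (hWΦmono : MonotoneOn WΦ (Ici 0))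
    (h𝕎φmono : MonotoneOn 𝕎φ (Ici 0))
    (hWΦpos : ∀ x ≥ (0:ℝ), 0 < WΦ x)
    (h𝕎φpos : ∀ x ≥ (0:ℝ), 0 < 𝕎φ x)
    (hWΦbdd : ∀ x, WΦ x ≤ LW) (hLW : 0 < LW)
    (h𝕎φbdd : ∀ x, 𝕎φ x ≤ L𝕎) (hL𝕎 : 0 < L𝕎)
    (h𝕎qlcont : Continuous 𝕎ql)
    (hΦφ : φq < Φql)
    (Wbb : ℝ → ℝ)
    (hWbb : ∀ a, Wbb a = 𝕎q a + lam * ∫ y in (0:ℝ)..b, 𝕎q (a - y) * 𝕎ql y) :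
    Tendsto (fun a => Wbb a / Wql a) atTop (nhds 0) := by
  obtain ⟨M, hM⟩ := (isCompact_Icc : IsCompact (Icc (0:ℝ) b)).exists_bound_of_continuousOn
    h𝕎qlcont.continuousOn
  have hM0 : 0 ≤ M := le_trans (norm_nonneg _) (hM 0 ⟨le_rfl, hb⟩)
  set K := L𝕎 * (1 + lam * b * exp (|φq| * b) * M) with hKdef
  have hK0 : 0 ≤ K := by
    have h1 : 0 ≤ lam * b := mul_nonneg hlam.le hb
    have h2 : 0 ≤ lam * b * exp (|φq| * b) * M :=
      mul_nonneg (mul_nonneg h1 (exp_pos _).le) hM0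
    exact mul_nonneg hL𝕎.le (by linarith)
  have hW0 : 0 < WΦ 0 := hWΦpos 0 le_rfl
  have hbound : ∀ᶠ a in atTop, ‖Wbb a / Wql a‖ ≤ (K / WΦ 0) * exp ((φq - Φql) * a) := by
    filter_upwards [eventually_ge_atTop (max b 0)] with a ha
    have hab : b ≤ a := le_trans (le_max_left _ _) ha
    have ha0 : 0 ≤ a := le_trans (le_max_right _ _) ha
    -- bound on the integral
    have hI : ‖∫ y in (0:ℝ)..b, 𝕎q (a - y) * 𝕎ql y‖ ≤
        (exp (φq * a) * exp (|φq| * b) * L𝕎 * M) * |b - 0| := by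
      apply intervalIntegral.norm_integral_le_of_norm_le_const
      intro y hy
      rw [Set.uIoc_of_le hb] at hy
      have hy0 : 0 ≤ y := hy.1.le
      have hyb : y ≤ b := hy.2
      have hay : 0 ≤ a - y := by linarith
      have h𝕎ay : 0 < 𝕎φ (a - y) := h𝕎φpos _ hay
      have hMy : |𝕎ql y| ≤ M := hM y ⟨hy0, hyb⟩
      have hexp : exp (φq * (a - y)) ≤ exp (φq * a) * exp (|φq| * b) := by
        rw [← Real.exp_add]
        apply Real.exp_le_exp.2
        have h1 : 0 ≤ (|φq| + φq) * y := mul_nonneg (by linarith [neg_abs_le φq]) hy0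
        have h2 : 0 ≤ |φq| * (b - y) := mul_nonneg (abs_nonneg φq) (by linarith)
        nlinarith
      have habs : |𝕎q (a - y)| ≤ exp (φq * a) * exp (|φq| * b) * L𝕎 := by
        rw [h𝕎, abs_of_pos (mul_pos (exp_pos _) h𝕎ay)]
        calc exp (φq * (a - y)) * 𝕎φ (a - y)
            ≤ (exp (φq * a) * exp (|φq| * b)) * L𝕎 := by
              apply mul_le_mul hexp (h𝕎φbdd _) h𝕎ay.le
              positivity
          _ = exp (φq * a) * exp (|φq| * b) * L𝕎 := by ring
      rw [Real.norm_eq_abs, abs_mul]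
      calc |𝕎q (a - y)| * |𝕎ql y|
          ≤ (exp (φq * a) * exp (|φq| * b) * L𝕎) * M := by
            apply mul_le_mul habs hMy (abs_nonneg _)
            positivity
        _ = exp (φq * a) * exp (|φq| * b) * L𝕎 * M := by ring
    rw [Real.norm_eq_abs, sub_zero, abs_of_nonneg hb] at hI
    -- numerator bound
    have hnum : |Wbb a| ≤ exp (φq * a) * K := by
      rw [hWbb]
      have h1 : |𝕎q a| ≤ exp (φq * a) * L𝕎 := by
        rw [h𝕎, abs_of_pos (mul_pos (exp_pos _) (h𝕎φpos _ ha0))]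
        exact mul_le_mul_of_nonneg_left (h𝕎φbdd _) (exp_pos _).le
      calc |𝕎q a + lam * ∫ y in (0:ℝ)..b, 𝕎q (a - y) * 𝕎ql y|
          ≤ |𝕎q a| + |lam * ∫ y in (0:ℝ)..b, 𝕎q (a - y) * 𝕎ql y| := abs_add_le _ _
        _ ≤ exp (φq * a) * L𝕎 + lam * (exp (φq * a) * exp (|φq| * b) * L𝕎 * M * b) := by
            rw [abs_mul, abs_of_pos hlam]
            exact add_le_add h1 (mul_le_mul_of_nonneg_left hI hlam.le)
        _ = exp (φq * a) * K := by rw [hKdef]; ring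
    -- denominator bound
    have hden : exp (Φql * a) * WΦ 0 ≤ Wql a := by
      rw [hW]
      exact mul_le_mul_of_nonneg_left (hWΦmono (mem_Ici.2 le_rfl) (mem_Ici.2 ha0) ha0)
        (exp_pos _).le
    have hdenpos : 0 < Wql a := lt_of_lt_of_le (by positivity) hden
    rw [norm_div, Real.norm_eq_abs, Real.norm_eq_abs, abs_of_pos hdenpos]
    calc |Wbb a| / Wql a
        ≤ (exp (φq * a) * K) / (exp (Φql * a) * WΦ 0) :=
          div_le_div₀ (by positivity) hnum (by positivity) hden
      _ = (K / WΦ 0) * exp ((φq - Φql) * a) := by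
          rw [sub_mul, Real.exp_sub]
          field_simp
  apply squeeze_zero_norm' hbound
  have h1 : Tendsto (fun a : ℝ => (Φql - φq) * a) atTop atTop :=
    tendsto_id.const_mul_atTop (by linarith)
  have h2 := Real.tendsto_exp_neg_atTop_nhds_zero.comp h1
  have h3 : Tendsto (fun a : ℝ => exp ((φq - Φql) * a)) atTop (nhds 0) :=
    h2.congr fun a => by
      show exp (-((Φql - φq) * a)) = exp ((φq - Φql) * a)
      ring_nf
  simpa using h3.const_mul (K / WΦ 0)
end

section
/- Let 𝒰_{b,a}^{(q,λ)}(x;y) := W^{(q)}(x−y) − 1_{x>b}( 𝒢_x^{(q,λ)}(x;y) − (𝒲_x^{(q,λ)}(x)/𝒲_b^{(q,λ)}(a)) 𝒢_b^{(q,λ)}(a;y) ), where 𝒢_u^{(q,λ)}(x;y) = γ_b^{(q,λ)}(x;y) + λ∫ᵤˣ W^{(q+λ)}(x−z)γ_b^{(q,λ)}(z;y)dz, 𝒲_u^{(q,λ)}(x) = W̄bb_{x−b}^{(q,λ)}(x) + λ∫ᵤˣ W^{(q+λ)}(x−z)W̄bb_{z−b}^{(q,λ)}(z)dz, and W̄_{b−y}^{(q,λ)}(a−y)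 = W^{(q)}(a−y) + λ∫_{b−y}^{a−y} W^{(q+λ)}(a−y−z)W^{(q)}(z)dz. Then λ∫ᵇᵃ W^{(q+λ)}(a−z) 𝒰_{b,a}^{(q,λ)}(z;y) dz = W̄_{b−y}^{(q,λ)}(a−y) − 𝒰_{b,a}^{(q,λ)}(a;y). -/
open Set MeasureTheory

/-- Eq. (A.7): λ∫ᵇᵃ W^{(q+λ)}(a−z) 𝒰_{b,a}^{(q,λ)}(z;y) dz
    = W̄_{b−y}^{(q,λ)}(a−y) − 𝒰_{b,a}^{(q,λ)}(a;y).
Here the parameter y is fixed, `γ z` denotes γ_b^{(q,λ)}(z;y) and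
`g z` denotes W̄bb_{z−b}^{(q,λ)}(z). -/
theorem stmt11 (Wq Wql γ g : ℝ → ℝ) (b a y lam : ℝ)
    (hy : 0 ≤ y) (hyb : y ≤ b) (hba : b ≤ a) (hlam : 0 < lam)
    (hWq : Continuous Wq) (hWqneg : ∀ x < (0:ℝ), Wq x = 0)
    (hWql : Continuous Wql) (hγ : Continuous γ) (hg : Continuous g)
    (Gcal Wcal : ℝ → ℝ → ℝ)
    (hGcal : ∀ u x, Gcal u x = γ x + lam * ∫ z in u..x, Wql (x - z) * γ z)
    (hWcal : ∀ u x, Wcal u x = g x + lam * ∫ z in u..x, Wql (x - z) * g z)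
    (hWcalba : Wcal b a ≠ 0)
    (U : ℝ → ℝ)
    (hU : ∀ x, U x = Wq (x - y) -
      (if b < x then Gcal x x - Wcal x x / Wcal b a * Gcal b a else 0))
    (Wbar : ℝ)
    (hWbar : Wbar = Wq (a - y) +
      lam * ∫ z in (b - y)..(a - y), Wql (a - y - z) * Wq z) :
    lam * ∫ z in b..a, Wql (a - z) * U z = Wbar - U a := by
  rcases hba.eq_or_lt with rfl | hlt
  · simp [hU, hWbar]
  · set C := Gcal b a / Wcal b a with hC
    have hcongr : ∫ z in b..a, Wql (a - z) * U z
        = ∫ z in b..a, Wql (a - z) * (Wq (z - y) - γ z + C * g z) := by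
      apply intervalIntegral.integral_congr_ae
      filter_upwards with z hz
      rw [Set.uIoc_of_le hba] at hz
      rw [hU z, if_pos hz.1, hGcal z z, hWcal z z]
      simp only [intervalIntegral.integral_same, mul_zero, add_zero, hC]
      ring
    have hWc : Continuous fun z : ℝ => Wql (a - z) :=
      hWql.comp (continuous_const.sub continuous_id)
    have hi1 : IntervalIntegrable (fun z => Wql (a - z) * Wq (z - y)) volume b a :=
      ((hWc.mul (hWq.comp (continuous_id.sub continuous_const))).intervalIntegrable b a)
    have hi2 : IntervalIntegrable (fun z => Wql (a - z) * γ z) volume b a :=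
      ((hWc.mul hγ).intervalIntegrable b a)
    have hi3 : IntervalIntegrable (fun z => Wql (a - z) * g z) volume b a :=
      ((hWc.mul hg).intervalIntegrable b a)
    have e : ∀ z, Wql (a - z) * (Wq (z - y) - γ z + C * g z)
        = (Wql (a - z) * Wq (z - y) - Wql (a - z) * γ z) + C * (Wql (a - z) * g z) := by
      intro z; ring
    have hsplit : ∫ z in b..a, Wql (a - z) * (Wq (z - y) - γ z + C * g z)
        = (∫ z in b..a, Wql (a - z) * Wq (z - y))
          - (∫ z in b..a, Wql (a - z) * γ z)
          + C * ∫ z in b..a, Wql (a - z) * g z := by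
      simp_rw [e]
      rw [intervalIntegral.integral_add (hi1.sub hi2) (hi3.const_mul C),
        intervalIntegral.integral_sub hi1 hi2, intervalIntegral.integral_const_mul]
    have hsub : (∫ z in b..a, Wql (a - z) * Wq (z - y))
        = ∫ u in (b - y)..(a - y), Wql (a - y - u) * Wq u := by
      have h := intervalIntegral.integral_comp_sub_right
        (a := b) (b := a) (fun u => Wql (a - y - u) * Wq u) y
      simpa [sub_sub_sub_cancel_right] using h
    have hB : lam * (∫ z in b..a, Wql (a - z) * γ z) = Gcal b a - γ a := by
      rw [hGcal b a]; ring
    have hD : lam * (∫ z in b..a, Wql (a - z) * g z) = Wcal b a - g a := by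
      rw [hWcal b a]; ring
    have hUa : U a = Wq (a - y) - (γ a - g a / Wcal b a * Gcal b a) := by
      rw [hU a, if_pos hlt, hGcal a a, hWcal a a]
      simp only [intervalIntegral.integral_same, mul_zero, add_zero]
    rw [hcongr, hsplit, hUa, hWbar, ← hsub, hC]
    have h1 : lam * ((∫ z in b..a, Wql (a - z) * Wq (z - y))
        - (∫ z in b..a, Wql (a - z) * γ z)
        + Gcal b a / Wcal b a * ∫ z in b..a, Wql (a - z) * g z)
      = lam * (∫ z in b..a, Wql (a - z) * Wq (z - y))
        - (lam * (∫ z in b..a, Wql (a - z) * γ z))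
        + Gcal b a / Wcal b a * (lam * ∫ z in b..a, Wql (a - z) * g z) := by ring
    rw [h1, hB, hD]
    field_simp
    ring
end
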